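/- For n ≥ 3, the ℚ-algebra homomorphism A_{n−1}^+ → A_n^+ determined on generators by a_{i,j} ↦ a_{i+1,j+1} (for 1 ≤ i < j ≤ n−1) is well defined and injective, and its image is the subalgebra of A_n^+ generated by the elements a_{i,j} with 2 ≤ i < j ≤ n. -/

import Mathlib

/-- Index set for the generators `a_{i,j}`, `i < j`, of `H^*(PΣ_n⁺; ℚ)`. -/
abbrev McIdx (n : ℕ) := {p : Fin n × Fin n // p.1 < p.2}

/-- The exterior algebra over `ℚ` on degree-one generators `a_{i,j}`, `i < j`. -/
abbrev McExt (n : ℕ) := ExteriorAlgebra ℚ (McIdx n →₀ ℚ)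

/-- The degree-one generator `a_{i,j}` (`i < j`) of the exterior algebra. -/
noncomputable def mcGen (n : ℕ) (p : McIdx n) : McExt n :=
  ExteriorAlgebra.ι ℚ (Finsupp.single p (1 : ℚ))

/-- The relations defining `H^*(PΣ_n⁺; ℚ)` as a quotient of the exterior algebra:
`a_{i,j} a_{i,k} - a_{i,j} a_{j,k} = 0` for `i < j < k`. -/
inductive McRel (n : ℕ) : McExt n → McExt n → Prop
  | tri {i j k : Fin n} (hij : i < j) (hjk : j < k) :
      McRel n (mcGen n ⟨(i, j), hij⟩ * mcGen n ⟨(i, k), hij.trans hjk⟩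
        - mcGen n ⟨(i, j), hij⟩ * mcGen n ⟨(j, k), hjk⟩) 0

/-- `A_n⁺ = E⁺/I⁺`, the rational cohomology ring of `PΣ_n⁺`. -/
abbrev McA (n : ℕ) := RingQuot (McRel n)

/-- The image `a_{i,j}` (`i < j`) in `A_n⁺` of the exterior generator. -/
noncomputable def mcA (n : ℕ) (p : McIdx n) : McA n :=
  RingQuot.mkAlgHom ℚ (McRel n) (mcGen n p)

/-- The index shift `(i, j) ↦ (i+1, j+1)`, embedding the generators of `A_{n-1}⁺` into
those of `A_n⁺`. -/
def mcShift (n : ℕ) (p : McIdx (n - 1)) : McIdx n :=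
  ⟨(⟨p.1.1.1 + 1, by have := p.1.1.isLt; omega⟩,
    ⟨p.1.2.1 + 1, by have := p.1.2.isLt; omega⟩),
    by have := p.2; rw [Fin.lt_def] at this ⊢; simpa using this⟩

-- auxiliary defs
def mcUnshift (n : ℕ) (p : McIdx n) (h : 0 < p.1.1.1) : McIdx (n - 1) :=
  ⟨(⟨p.1.1.1 - 1, (by have h1 := p.1.1.isLt; have h2 := p.1.2.isLt; have h3 := p.2; rw [Fin.lt_def] at h3; omega : p.1.1.1 - 1 < n - 1)⟩,
    ⟨p.1.2.1 - 1, (by have h2 := p.1.2.isLt; have h3 := p.2; rw [Fin.lt_def] at h3; omega : p.1.2.1 - 1 < n - 1)⟩),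
    (by have h3 := p.2; rw [Fin.lt_def] at h3; rw [Fin.lt_def]; simp only [Fin.val_mk] at *; omega)⟩

lemma mcUnshift_mcShift (n : ℕ) (p : McIdx (n-1)) (h : 0 < (mcShift n p).1.1.1) :
    mcUnshift n (mcShift n p) h = p := by
  apply Subtype.ext; apply Prod.ext <;> apply Fin.ext <;> simp [mcShift, mcUnshift]

lemma mcShift_mcUnshift (n : ℕ) (p : McIdx n) (h : 0 < p.1.1.1) :
    mcShift n (mcUnshift n p h) = p := by
  have h3 := p.2; rw [Fin.lt_def] at h3
  apply Subtype.ext; apply Prod.ext <;> apply Fin.ext <;> simp [mcShift, mcUnshift] <;> omega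

lemma mcA_rel (n : ℕ) {i j k : Fin n} (hij : i < j) (hjk : j < k) :
    mcA n ⟨(i, j), hij⟩ * mcA n ⟨(i, k), hij.trans hjk⟩
      - mcA n ⟨(i, j), hij⟩ * mcA n ⟨(j, k), hjk⟩ = 0 := by
  unfold mcA
  rw [← map_mul, ← map_mul, ← map_sub, RingQuot.mkAlgHom_rel ℚ (McRel.tri hij hjk), map_zero]

noncomputable def mcPhiExt (n : ℕ) : McExt (n - 1) →ₐ[ℚ] McA n :=
  ExteriorAlgebra.lift ℚ ⟨(RingQuot.mkAlgHom ℚ (McRel n)).toLinearMap ∘ₗ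
      (ExteriorAlgebra.ι ℚ) ∘ₗ Finsupp.lmapDomain ℚ ℚ (mcShift n), fun m => by
    simp [← map_mul, ExteriorAlgebra.ι_sq_zero]⟩

lemma mcPhiExt_ι (n : ℕ) (v : McIdx (n-1) →₀ ℚ) :
    mcPhiExt n (ExteriorAlgebra.ι ℚ v) =
      RingQuot.mkAlgHom ℚ (McRel n) (ExteriorAlgebra.ι ℚ (Finsupp.mapDomain (mcShift n) v)) := by
  simp [mcPhiExt, ExteriorAlgebra.lift_ι_apply, Finsupp.lmapDomain]

lemma mcPhiExt_gen (n : ℕ) (p : McIdx (n-1)) :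
    mcPhiExt n (mcGen (n-1) p) = mcA n (mcShift n p) := by
  rw [mcGen, mcPhiExt_ι, Finsupp.mapDomain_single]; rfl

noncomputable def mcPhi (n : ℕ) : McA (n - 1) →ₐ[ℚ] McA n :=
  RingQuot.liftAlgHom ℚ ⟨mcPhiExt n, by
    rintro x y ⟨hij, hjk⟩
    rw [map_sub, map_mul, map_mul, mcPhiExt_gen, mcPhiExt_gen, mcPhiExt_gen, map_zero]
    exact mcA_rel n (i := (mcShift n ⟨(_, _), hij⟩).1.1) (by
        have := hij; rw [Fin.lt_def] at this ⊢; simpa [mcShift] using this)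
      (by have := hjk; rw [Fin.lt_def] at this ⊢; simpa [mcShift] using this)⟩

lemma mcPhi_gen (n : ℕ) (p : McIdx (n-1)) : mcPhi n (mcA (n-1) p) = mcA n (mcShift n p) := by
  rw [mcPhi, mcA, RingQuot.liftAlgHom_mkAlgHom_apply, mcPhiExt_gen]

noncomputable def mcW (n : ℕ) (p : McIdx n) : McIdx (n - 1) →₀ ℚ :=
  if h : 0 < p.1.1.1 then Finsupp.single (mcUnshift n p h) 1 else 0

noncomputable def mcPsiExt (n : ℕ) : McExt n →ₐ[ℚ] McA (n - 1) :=
  ExteriorAlgebra.lift ℚ ⟨(RingQuot.mkAlgHom ℚ (McRel (n-1))).toLinearMap ∘ₗ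
      (ExteriorAlgebra.ι ℚ) ∘ₗ
      Finsupp.lsum ℚ (fun p => LinearMap.toSpanSingleton ℚ _ (mcW n p)), fun m => by
    simp [← map_mul, ExteriorAlgebra.ι_sq_zero]⟩

lemma mcPsiExt_gen (n : ℕ) (p : McIdx n) :
    mcPsiExt n (mcGen n p) = RingQuot.mkAlgHom ℚ (McRel (n-1)) (ExteriorAlgebra.ι ℚ (mcW n p)) := by
  simp [mcPsiExt, mcGen, ExteriorAlgebra.lift_ι_apply]

lemma mcW_pos (n : ℕ) (p : McIdx n) (h : 0 < p.1.1.1) :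
    mcW n p = Finsupp.single (mcUnshift n p h) 1 := dif_pos h

lemma mcW_zero (n : ℕ) (p : McIdx n) (h : ¬ 0 < p.1.1.1) : mcW n p = 0 := dif_neg h

noncomputable def mcPsi (n : ℕ) : McA n →ₐ[ℚ] McA (n - 1) :=
  RingQuot.liftAlgHom ℚ ⟨mcPsiExt n, by
    rintro x y ⟨hij, hjk⟩
    rename_i i j k
    rw [map_sub, map_mul, map_mul, mcPsiExt_gen, mcPsiExt_gen, mcPsiExt_gen, map_zero]
    by_cases h : 0 < i.1
    · have hj : 0 < j.1 := lt_of_le_of_lt h.le (Fin.lt_def.mp hij)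
      have hk : 0 < k.1 := lt_of_le_of_lt hj.le (Fin.lt_def.mp hjk)
      rw [mcW_pos n _ h, mcW_pos n ⟨(i,k),_⟩ h, mcW_pos n ⟨(j,k),hjk⟩ hj]
      have hij' : (mcUnshift n ⟨(i,j),hij⟩ h).1.1 < (mcUnshift n ⟨(i,j),hij⟩ h).1.2 :=
        (mcUnshift n ⟨(i,j),hij⟩ h).2
      have hjk' : (mcUnshift n ⟨(i,j),hij⟩ h).1.2 < (mcUnshift n ⟨(j,k),hjk⟩ hj).1.2 := by
        rw [Fin.lt_def]; simp only [mcUnshift]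
        have := Fin.lt_def.mp hjk; omega
      have := mcA_rel (n-1) hij' hjk'
      unfold mcA at this
      convert this using 4 <;>
        · unfold mcGen; congr 2
    · rw [mcW_zero n ⟨(i,j),hij⟩ h]
      simp⟩

lemma mcPsi_gen (n : ℕ) (p : McIdx n) :
    mcPsi n (mcA n p) = RingQuot.mkAlgHom ℚ (McRel (n-1)) (ExteriorAlgebra.ι ℚ (mcW n p)) := by
  rw [mcPsi, mcA, RingQuot.liftAlgHom_mkAlgHom_apply, mcPsiExt_gen]

lemma mcPsi_mcPhi (n : ℕ) (x : McA (n-1)) : mcPsi n (mcPhi n x) = x := by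
  have key : (mcPsi n).comp ((mcPhi n).comp (RingQuot.mkAlgHom ℚ (McRel (n-1)))) =
      RingQuot.mkAlgHom ℚ (McRel (n-1)) := by
    apply ExteriorAlgebra.hom_ext
    apply Finsupp.lhom_ext
    intro p c
    have hc : Finsupp.single p c = c • Finsupp.single p (1:ℚ) := by
      rw [Finsupp.smul_single, smul_eq_mul, mul_one]
    simp only [LinearMap.coe_comp, Function.comp_apply, AlgHom.toLinearMap_apply, hc, map_smul]
    congr 1
    show mcPsi n (mcPhi n (mcA (n-1) p)) = _
    rw [mcPhi_gen, mcPsi_gen, mcW_pos n _ (by simp [mcShift])]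
    exact congrArg (fun u => RingQuot.mkAlgHom ℚ (McRel (n-1)) (ExteriorAlgebra.ι ℚ (Finsupp.single u (1:ℚ)))) (mcUnshift_mcShift n p _)
  obtain ⟨y, rfl⟩ := RingQuot.mkAlgHom_surjective ℚ (McRel (n-1)) x
  exact AlgHom.congr_fun key y

lemma mcA_adjoin_top (m : ℕ) : Algebra.adjoin ℚ (Set.range (mcA m)) = ⊤ := by
  rw [eq_top_iff]
  rintro x -
  obtain ⟨y, rfl⟩ := RingQuot.mkAlgHom_surjective ℚ (McRel m) x
  induction y using ExteriorAlgebra.induction with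
  | algebraMap r => rw [AlgHom.commutes]; exact Subalgebra.algebraMap_mem _ r
  | mul a b ha hb => rw [map_mul]; exact mul_mem ha hb
  | add a b ha hb => rw [map_add]; exact add_mem ha hb
  | ι v =>
    induction v using Finsupp.induction_linear with
    | zero => rw [map_zero, map_zero]; exact zero_mem _
    | add f g hf hg => rw [map_add, map_add]; exact add_mem hf hg
    | single p c =>
      have hc : Finsupp.single p c = c • Finsupp.single p (1:ℚ) := by
        rw [Finsupp.smul_single, smul_eq_mul, mul_one]
      rw [hc, map_smul, map_smul]
      exact Subalgebra.smul_mem _ (Algebra.subset_adjoin (Set.mem_range_self p)) c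


/-- For `n ≥ 3`, the `ℚ`-algebra homomorphism `A_{n-1}⁺ → A_n⁺` determined on
generators by `a_{i,j} ↦ a_{i+1,j+1}` is well defined and injective, and its image is the
subalgebra of `A_n⁺` generated by the `a_{i,j}` with `2 ≤ i < j ≤ n` (0-based: `1 ≤ i < j`). -/
theorem mcA_shift_hom (n : ℕ) (hn : 3 ≤ n) :
    ∃ φ : McA (n - 1) →ₐ[ℚ] McA n,
      (∀ p : McIdx (n - 1), φ (mcA (n - 1) p) = mcA n (mcShift n p)) ∧
      Function.Injective φ ∧
      φ.range = Algebra.adjoin ℚ {x : McA n | ∃ p : McIdx n, 0 < p.1.1.1 ∧ x = mcA n p} := by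
  refine ⟨mcPhi n, mcPhi_gen n, Function.LeftInverse.injective (mcPsi_mcPhi n), ?_⟩
  rw [← Algebra.map_top, ← mcA_adjoin_top (n-1), AlgHom.map_adjoin]
  congr 1
  ext x
  constructor
  · rintro ⟨y, ⟨p, rfl⟩, rfl⟩
    exact ⟨mcShift n p, by simp [mcShift], mcPhi_gen n p⟩
  · rintro ⟨p, hp, rfl⟩
    exact ⟨mcA (n-1) (mcUnshift n p hp), ⟨_, rfl⟩,
      by rw [mcPhi_gen, mcShift_mcUnshift]⟩
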